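/- Let f, g : ℝ² → ℝ be smooth and h > 0. Define the operator 𝔅 u = (-h∂₁ + ∂₁f)(g·(h∂₂u + (∂₂f)u)) - (-h∂₂ + ∂₂f)(g·(h∂₁u + (∂₁f)u)). Then for every smooth u, 𝔅u = ½(b · h∇u + h div(b u)) pointwise, where b = (h∂₂g - 2g∂₂f, -h∂₁g + 2g∂₁f). -/

import Mathlib

/-- First partial derivative on `ℝ × ℝ`. -/
noncomputable def pd1 (u : ℝ × ℝ → ℝ) (x : ℝ × ℝ) : ℝ := fderiv ℝ u x (1, 0)

/-- Second partial derivative on `ℝ × ℝ`. -/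
noncomputable def pd2 (u : ℝ × ℝ → ℝ) (x : ℝ × ℝ) : ℝ := fderiv ℝ u x (0, 1)



lemma contDiff_pd1 {u : ℝ × ℝ → ℝ} (hu : ContDiff ℝ (⊤ : ℕ∞) u) : ContDiff ℝ (⊤ : ℕ∞) (pd1 u) :=
  (hu.fderiv_right (by simp)).clm_apply contDiff_const

lemma contDiff_pd2 {u : ℝ × ℝ → ℝ} (hu : ContDiff ℝ (⊤ : ℕ∞) u) : ContDiff ℝ (⊤ : ℕ∞) (pd2 u) :=
  (hu.fderiv_right (by simp)).clm_apply contDiff_const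

lemma pd1_mul {a b : ℝ × ℝ → ℝ} {x : ℝ × ℝ} (ha : DifferentiableAt ℝ a x)
    (hb : DifferentiableAt ℝ b x) :
    pd1 (fun y => a y * b y) x = pd1 a x * b x + a x * pd1 b x := by
  simp [pd1, fderiv_fun_mul ha hb]; ring

lemma pd2_mul {a b : ℝ × ℝ → ℝ} {x : ℝ × ℝ} (ha : DifferentiableAt ℝ a x)
    (hb : DifferentiableAt ℝ b x) :
    pd2 (fun y => a y * b y) x = pd2 a x * b x + a x * pd2 b x := by
  simp [pd2, fderiv_fun_mul ha hb]; ring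

lemma pd1_add {a b : ℝ × ℝ → ℝ} {x : ℝ × ℝ} (ha : DifferentiableAt ℝ a x)
    (hb : DifferentiableAt ℝ b x) :
    pd1 (fun y => a y + b y) x = pd1 a x + pd1 b x := by
  simp [pd1, fderiv_fun_add ha hb]

lemma pd2_add {a b : ℝ × ℝ → ℝ} {x : ℝ × ℝ} (ha : DifferentiableAt ℝ a x)
    (hb : DifferentiableAt ℝ b x) :
    pd2 (fun y => a y + b y) x = pd2 a x + pd2 b x := by
  simp [pd2, fderiv_fun_add ha hb]

lemma pd1_const_mul {a : ℝ × ℝ → ℝ} {x : ℝ × ℝ} (c : ℝ) (ha : DifferentiableAt ℝ a x) :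
    pd1 (fun y => c * a y) x = c * pd1 a x := by
  simp [pd1, fderiv_const_mul ha c]

lemma pd2_const_mul {a : ℝ × ℝ → ℝ} {x : ℝ × ℝ} (c : ℝ) (ha : DifferentiableAt ℝ a x) :
    pd2 (fun y => c * a y) x = c * pd2 a x := by
  simp [pd2, fderiv_const_mul ha c]

lemma pd1_neg {a : ℝ × ℝ → ℝ} {x : ℝ × ℝ} :
    pd1 (fun y => -(a y)) x = -pd1 a x := by
  simp [pd1, fderiv_neg]

lemma pd2_neg {a : ℝ × ℝ → ℝ} {x : ℝ × ℝ} :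
    pd2 (fun y => -(a y)) x = -pd2 a x := by
  simp [pd2, fderiv_neg]

lemma pd1_sub {a b : ℝ × ℝ → ℝ} {x : ℝ × ℝ} (ha : DifferentiableAt ℝ a x)
    (hb : DifferentiableAt ℝ b x) :
    pd1 (fun y => a y - b y) x = pd1 a x - pd1 b x := by
  simp [pd1, fderiv_fun_sub ha hb]

lemma pd2_sub {a b : ℝ × ℝ → ℝ} {x : ℝ × ℝ} (ha : DifferentiableAt ℝ a x)
    (hb : DifferentiableAt ℝ b x) :
    pd2 (fun y => a y - b y) x = pd2 a x - pd2 b x := by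
  simp [pd2, fderiv_fun_sub ha hb]

lemma pd_symm {u : ℝ × ℝ → ℝ} (hu : ContDiff ℝ (⊤ : ℕ∞) u) (x : ℝ × ℝ) :
    pd1 (pd2 u) x = pd2 (pd1 u) x := by
  have hdu : ContDiff ℝ (⊤ : ℕ∞) (fderiv ℝ u) := hu.fderiv_right (by simp)
  have h1 : ∀ v : ℝ × ℝ, fderiv ℝ (fun y => fderiv ℝ u y v) x =
      (fderiv ℝ (fderiv ℝ u) x).flip v := by
    intro v
    have := fderiv_clm_apply (c := fderiv ℝ u) (u := fun _ : ℝ × ℝ => v)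
      (hdu.differentiable (by simp) x) (differentiableAt_const v)
    simpa using this
  have hsymm := second_derivative_symmetric
    (f := u) (f' := fderiv ℝ u) (f'' := fderiv ℝ (fderiv ℝ u) x) (x := x)
    (fun y => (hu.differentiable (by simp) y).hasFDerivAt)
    ((hdu.differentiable (by simp) x).hasFDerivAt)
  show fderiv ℝ (fun y => fderiv ℝ u y (0,1)) x (1,0)
      = fderiv ℝ (fun y => fderiv ℝ u y (1,0)) x (0,1)
  rw [h1, h1]
  simpa using hsymm (1,0) (0,1)

/-- the operator
`𝔅u = (-h∂₁ + ∂₁f)(g(h∂₂u + (∂₂f)u)) - (-h∂₂ + ∂₂f)(g(h∂₁u + (∂₁f)u))`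
equals `½(b ⋅ h∇u + h div(bu))` with `b = (h∂₂g - 2g∂₂f, -h∂₁g + 2g∂₁f)`. -/
theorem scrB_eq_transport_form (h : ℝ) (hh : 0 < h)
    (f g : ℝ × ℝ → ℝ) (hf : ContDiff ℝ (⊤ : ℕ∞) f) (hg : ContDiff ℝ (⊤ : ℕ∞) g)
    (u : ℝ × ℝ → ℝ) (hu : ContDiff ℝ (⊤ : ℕ∞) u) :
    ∀ x : ℝ × ℝ,
      (-h * pd1 (fun y => g y * (h * pd2 u y + pd2 f y * u y)) x
          + pd1 f x * (g x * (h * pd2 u x + pd2 f x * u x)))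
        - (-h * pd2 (fun y => g y * (h * pd1 u y + pd1 f y * u y)) x
          + pd2 f x * (g x * (h * pd1 u x + pd1 f x * u x)))
      = (1 / 2) *
        ((h * pd2 g x - 2 * g x * pd2 f x) * (h * pd1 u x)
          + (-(h * pd1 g x) + 2 * g x * pd1 f x) * (h * pd2 u x)
          + h * (pd1 (fun y => (h * pd2 g y - 2 * g y * pd2 f y) * u y) x
            + pd2 (fun y => (-(h * pd1 g y) + 2 * g y * pd1 f y) * u y) x)) := by
  intro x
  have hud : Differentiable ℝ u := hu.differentiable (by simp)
  have hfd : Differentiable ℝ f := hf.differentiable (by simp)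
  have hgd : Differentiable ℝ g := hg.differentiable (by simp)
  have h1u : DifferentiableAt ℝ (pd1 u) x := ((contDiff_pd1 hu).differentiable (by simp)) x
  have h2u : DifferentiableAt ℝ (pd2 u) x := ((contDiff_pd2 hu).differentiable (by simp)) x
  have h1f : DifferentiableAt ℝ (pd1 f) x := ((contDiff_pd1 hf).differentiable (by simp)) x
  have h2f : DifferentiableAt ℝ (pd2 f) x := ((contDiff_pd2 hf).differentiable (by simp)) x
  have h1g : DifferentiableAt ℝ (pd1 g) x := ((contDiff_pd1 hg).differentiable (by simp)) x
  have h2g : DifferentiableAt ℝ (pd2 g) x := ((contDiff_pd2 hg).differentiable (by simp)) x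
  have E1 : pd1 (fun y => g y * (h * pd2 u y + pd2 f y * u y)) x
      = pd1 g x * (h * pd2 u x + pd2 f x * u x)
        + g x * (h * pd1 (pd2 u) x + (pd1 (pd2 f) x * u x + pd2 f x * pd1 u x)) := by
    rw [pd1_mul (hgd x) ((h2u.const_mul h).fun_add (h2f.fun_mul (hud x))),
      pd1_add (h2u.const_mul h) (h2f.fun_mul (hud x)),
      pd1_const_mul h h2u, pd1_mul h2f (hud x)]
  have E2 : pd2 (fun y => g y * (h * pd1 u y + pd1 f y * u y)) x
      = pd2 g x * (h * pd1 u x + pd1 f x * u x)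
        + g x * (h * pd2 (pd1 u) x + (pd2 (pd1 f) x * u x + pd1 f x * pd2 u x)) := by
    rw [pd2_mul (hgd x) ((h1u.const_mul h).fun_add (h1f.fun_mul (hud x))),
      pd2_add (h1u.const_mul h) (h1f.fun_mul (hud x)),
      pd2_const_mul h h1u, pd2_mul h1f (hud x)]
  have E3 : pd1 (fun y => (h * pd2 g y - 2 * g y * pd2 f y) * u y) x
      = (h * pd1 (pd2 g) x - (2 * pd1 g x * pd2 f x + 2 * g x * pd1 (pd2 f) x)) * u x
        + (h * pd2 g x - 2 * g x * pd2 f x) * pd1 u x := by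
    rw [pd1_mul (((h2g.const_mul h).fun_sub (((hgd x).const_mul 2).fun_mul h2f))) (hud x),
      pd1_sub (h2g.const_mul h) (((hgd x).const_mul 2).fun_mul h2f),
      pd1_const_mul h h2g, pd1_mul ((hgd x).const_mul 2) h2f,
      pd1_const_mul 2 (hgd x)]
  have E4 : pd2 (fun y => (-(h * pd1 g y) + 2 * g y * pd1 f y) * u y) x
      = (-(h * pd2 (pd1 g) x) + (2 * pd2 g x * pd1 f x + 2 * g x * pd2 (pd1 f) x)) * u x
        + (-(h * pd1 g x) + 2 * g x * pd1 f x) * pd2 u x := by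
    rw [pd2_mul (((h1g.const_mul h).fun_neg.fun_add (((hgd x).const_mul 2).fun_mul h1f))) (hud x),
      pd2_add (h1g.const_mul h).fun_neg (((hgd x).const_mul 2).fun_mul h1f),
      pd2_neg, pd2_const_mul h h1g, pd2_mul ((hgd x).const_mul 2) h1f,
      pd2_const_mul 2 (hgd x)]
  rw [E1, E2, E3, E4, pd_symm hu x, pd_symm hf x, pd_symm hg x]
  ring
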